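/- arXiv:2603.24545 — 2 statements merged into one kernel-verified Lean document; each statement's English description precedes it below -/
import Mathlib

section
/- Let H be a subgraph of the complete graph K_n without isolated vertices, with vertex set V(H), |V(H)| = v(H), and edge set E(H). Then the expectation of the signed subgraph count of H under the planted model equals (k/n)^{v(H)} times its expectation under the full random geometric graph: E_{G∼G(n,p,d,k)}[ Π_{ij∈E(H)} (G_ij − p) ] = (k/n)^{v(H)} · E_{G∼G(n,p,d)}[ Π_{ij∈E(H)} (G_ij − p) ]. -/
open MeasureTheory ProbabilityTheory Filter
open scoped InnerProductSpace ENNReal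

noncomputable section

/-- Bernoulli measure on `Bool` with success probability `p`. -/
def bern (p : ℝ) : Measure Bool :=
  ENNReal.ofReal p • Measure.dirac true + ENNReal.ofReal (1 - p) • Measure.dirac false

/-- Standard Gaussian on `ℝ^d`. -/
def stdGaussian (d : ℕ) : Measure (EuclideanSpace ℝ (Fin d)) :=
  Measure.map (MeasurableEquiv.toLp 2 (Fin d → ℝ))
    (Measure.pi fun _ : Fin d => gaussianReal 0 1)

/-- Uniform (Haar) probability measure on the unit sphere `S^{d-1} ⊂ ℝ^d`,
realized as the pushforward of the standard Gaussian under normalization. -/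
def uniformSphere (d : ℕ) : Measure (EuclideanSpace ℝ (Fin d)) :=
  Measure.map (fun x => ‖x‖⁻¹ • x) (stdGaussian d)

/-- `τ` is the threshold `τ(p,d)`: two independent uniform points on the sphere
have inner product at least `τ` with probability exactly `p`. -/
def IsSphereThreshold (d : ℕ) (p τ : ℝ) : Prop :=
  ((uniformSphere d).prod (uniformSphere d)) {q | τ ≤ ⟪q.1, q.2⟫_ℝ} = ENNReal.ofReal p

/-- Ordered pairs `i < j` of vertices: the potential edges. -/
abbrev EdgePair (n : ℕ) := {e : Fin n × Fin n // e.1 < e.2}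

/-- A graph on `n` vertices, given by its edge indicators. -/
abbrev EdgeGraph (n : ℕ) := EdgePair n → Bool

/-- Real-valued edge indicator. -/
def edgeVal {n : ℕ} (G : EdgeGraph n) (e : EdgePair n) : ℝ := if G e then 1 else 0

/-- The Erdős–Rényi model `G(n,p)`. -/
def erdosRenyi (n : ℕ) (p : ℝ) : Measure (EdgeGraph n) :=
  Measure.pi fun _ : EdgePair n => bern p

/-- The random geometric graph `G(n,p,d)` with threshold `τ`. -/
def rgg (n d : ℕ) (τ : ℝ) : Measure (EdgeGraph n) :=
  Measure.map
    (fun U : Fin n → EuclideanSpace ℝ (Fin d) =>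
      fun e : EdgePair n => if τ ≤ ⟪U e.1.1, U e.1.2⟫_ℝ then true else false)
    (Measure.pi fun _ : Fin n => uniformSphere d)

/-- The planted model `G(n,p,d,k)` with threshold `τ`: each vertex joins the
community independently with probability `k/n`; community vertices get i.i.d.
uniform latent vectors on the sphere and their mutual edges are geometric,
all other edges are i.i.d. Bernoulli(p). -/
def plantedModel (n k d : ℕ) (p τ : ℝ) : Measure (EdgeGraph n) :=
  Measure.map
    (fun ω : (Fin n → Bool) × (Fin n → EuclideanSpace ℝ (Fin d)) × (EdgePair n → Bool) =>
      fun e : EdgePair n =>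
        if ω.1 e.1.1 && ω.1 e.1.2 then
          if τ ≤ ⟪ω.2.1 e.1.1, ω.2.1 e.1.2⟫_ℝ then true else false
        else ω.2.2 e)
    ((Measure.pi fun _ : Fin n => bern ((k : ℝ) / n)).prod
      ((Measure.pi fun _ : Fin n => uniformSphere d).prod
        (Measure.pi fun _ : EdgePair n => bern p)))

/-- Signed triangle count restricted to a vertex subset `A`. -/
def signedTriOn {n : ℕ} (p : ℝ) (A : Finset (Fin n)) (G : EdgeGraph n) : ℝ :=
  ∑ i ∈ A, ∑ j ∈ A, ∑ l ∈ A,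
    if h : i < j ∧ j < l then
      (edgeVal G ⟨(i, j), h.1⟩ - p) * (edgeVal G ⟨(j, l), h.2⟩ - p) *
        (edgeVal G ⟨(i, l), h.1.trans h.2⟩ - p)
    else 0

/-- The global signed triangle count `f_tri`. -/
def signedTriangleCount (n : ℕ) (p : ℝ) (G : EdgeGraph n) : ℝ :=
  signedTriOn p Finset.univ G

/-- Expectation of a real statistic under a measure. -/
def expect {α : Type*} [MeasurableSpace α] (μ : Measure α) (f : α → ℝ) : ℝ := ∫ x, f x ∂μ

/-- Variance of a real statistic under a measure. -/
def mvar {α : Type*} [MeasurableSpace α] (μ : Measure α) (f : α → ℝ) : ℝ :=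
  ∫ x, (f x - expect μ f) ^ 2 ∂μ

/-- Expected signed `ℓ`-cycle weight under the latent-space geometric model:
the expectation of `∏ (G_e − p)` over the edges of a fixed `ℓ`-cycle in `G(n,p,d)`. -/
def signedCycleExpect (d ℓ : ℕ) (p τ : ℝ) : ℝ :=
  ∫ U : Fin ℓ → EuclideanSpace ℝ (Fin d),
    (∏ i : Fin ℓ, ((if τ ≤ ⟪U i, U (finRotate ℓ i)⟫_ℝ then (1 : ℝ) else 0) - p))
    ∂(Measure.pi fun _ : Fin ℓ => uniformSphere d)



section AuxLemmas

lemma bern_isProb {p : ℝ} (h0 : 0 ≤ p) (h1 : p ≤ 1) : IsProbabilityMeasure (bern p) := by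
  constructor
  simp [bern, ← ENNReal.ofReal_add h0 (by linarith : (0:ℝ) ≤ 1 - p)]

lemma integral_bern {p : ℝ} (h0 : 0 ≤ p) (h1 : p ≤ 1) (f : Bool → ℝ) :
    ∫ b, f b ∂bern p = p * f true + (1-p) * f false := by
  rw [bern, integral_add_measure, integral_smul_measure, integral_smul_measure,
    integral_dirac, integral_dirac, ENNReal.toReal_ofReal h0,
    ENNReal.toReal_ofReal (by linarith : (0:ℝ) ≤ 1-p)]
  · rfl
  · exact (Integrable.of_finite (μ := Measure.dirac _) (f := f)).smul_measure (by simp)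
  · exact (Integrable.of_finite (μ := Measure.dirac _) (f := f)).smul_measure (by simp)

lemma stdGaussian_isProb (d : ℕ) : IsProbabilityMeasure (stdGaussian d) :=
  Measure.isProbabilityMeasure_map (MeasurableEquiv.measurable _).aemeasurable

lemma uniformSphere_isProb (d : ℕ) : IsProbabilityMeasure (uniformSphere d) := by
  haveI := stdGaussian_isProb d
  exact Measure.isProbabilityMeasure_map ((measurable_norm.inv.smul measurable_id).aemeasurable)

lemma integral_pi_prod {ι : Type*} [Fintype ι] {E : Type*} [MeasurableSpace E]
    (μ : Measure E) [SigmaFinite μ] (f : ι → E → ℝ) :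
    ∫ x : ι → E, ∏ i, f i (x i) ∂(Measure.pi fun _ => μ) = ∏ i, ∫ x, f i x ∂μ := by
  letI : MeasureSpace E := ⟨μ⟩
  haveI : SigmaFinite (volume : Measure E) := ‹_›
  exact MeasureTheory.integral_fintype_prod_eq_prod f

lemma integral_pi_indicator_prod {ι : Type*} [Fintype ι] [DecidableEq ι] {q : ℝ}
    (h0 : 0 ≤ q) (h1 : q ≤ 1) (A : Finset ι) :
    ∫ x : ι → Bool, ∏ v ∈ A, (if x v then (1:ℝ) else 0) ∂(Measure.pi fun _ => bern q)
      = q ^ A.card := by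
  haveI := bern_isProb h0 h1
  have key : ∀ x : ι → Bool, ∏ v ∈ A, (if x v then (1:ℝ) else 0)
      = ∏ v, (fun b => if v ∈ A then (if b then (1:ℝ) else 0) else 1) (x v) := by
    intro x
    exact (Fintype.prod_extend_by_one A (fun v => if x v then (1:ℝ) else 0)).symm
  rw [integral_congr_ae (Filter.Eventually.of_forall key),
    integral_pi_prod (bern q) (fun v b => if v ∈ A then (if b then (1:ℝ) else 0) else 1)]
  have : ∀ v : ι, (∫ b, (if v ∈ A then (if b then (1:ℝ) else 0) else 1) ∂bern q)
      = if v ∈ A then q else 1 := by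
    intro v
    by_cases hv : v ∈ A <;> simp [hv, integral_bern h0 h1]
  rw [Finset.prod_congr rfl (fun v _ => this v), Finset.prod_ite_mem, Finset.univ_inter,
    Finset.prod_const]

lemma integral_pi_signed_prod {ι : Type*} [Fintype ι] [DecidableEq ι] {p : ℝ}
    (h0 : 0 ≤ p) (h1 : p ≤ 1) (s : Finset ι) :
    ∫ B : ι → Bool, ∏ e ∈ s, ((if B e then (1:ℝ) else 0) - p) ∂(Measure.pi fun _ => bern p)
      = if s = ∅ then 1 else 0 := by
  haveI := bern_isProb h0 h1
  have key : ∀ B : ι → Bool, ∏ e ∈ s, ((if B e then (1:ℝ) else 0) - p)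
      = ∏ e, (fun b => if e ∈ s then (if b then (1:ℝ) else 0) - p else 1) (B e) := by
    intro B
    exact (Fintype.prod_extend_by_one s (fun e => (if B e then (1:ℝ) else 0) - p)).symm
  rw [integral_congr_ae (Filter.Eventually.of_forall key),
    integral_pi_prod (bern p) (fun e b => if e ∈ s then (if b then (1:ℝ) else 0) - p else 1)]
  have : ∀ e : ι, (∫ b, (if e ∈ s then (if b then (1:ℝ) else 0) - p else 1) ∂bern p)
      = if e ∈ s then 0 else 1 := by
    intro e
    by_cases he : e ∈ s
    · simp [he, integral_bern h0 h1]; ring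
    · simp only [if_neg he]
      rw [integral_const, probReal_univ]
      simp
  rw [Finset.prod_congr rfl (fun e _ => this e)]
  rcases s.eq_empty_or_nonempty with h | h
  · simp [h]
  · obtain ⟨e, he⟩ := h
    rw [Finset.prod_eq_zero (Finset.mem_univ e) (by simp [he])]
    simp [Finset.nonempty_iff_ne_empty.mp ⟨e, he⟩]

end AuxLemmas

/-- The vertices covered by a set of edges (a subgraph of `K_n` with no
isolated vertices is identified with its edge set). -/
def vertexSet {n : ℕ} (H : Finset (EdgePair n)) : Finset (Fin n) :=
  H.biUnion fun e => {e.1.1, e.1.2}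

/-- **Signed subgraph counts under the planted model** (Lemma 4.1): for any
subgraph `H` of `K_n` without isolated vertices,
`E_{G∼G(n,p,d,k)}[∏_{ij∈E(H)}(G_ij − p)]
  = (k/n)^{v(H)} · E_{G∼G(n,p,d)}[∏_{ij∈E(H)}(G_ij − p)]`. -/
theorem signed_subgraph_expectation_planted
    (n k d : ℕ) (p τ : ℝ) (hk : k ≤ n) (hp0 : 0 ≤ p) (hp1 : p ≤ 1)
    (H : Finset (EdgePair n)) :
    expect (plantedModel n k d p τ) (fun G => ∏ e ∈ H, (edgeVal G e - p)) =
      ((k : ℝ) / n) ^ (vertexSet H).card *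
        expect (rgg n d τ) (fun G => ∏ e ∈ H, (edgeVal G e - p)) := by
  classical
  haveI hUS := uniformSphere_isProb d
  have hq0 : (0:ℝ) ≤ (k:ℝ)/n := by positivity
  have hq1 : (k:ℝ)/n ≤ 1 := div_le_one_of_le₀ (by exact_mod_cast hk) (Nat.cast_nonneg n)
  haveI := bern_isProb hq0 hq1
  haveI := bern_isProb hp0 hp1
  set μx := Measure.pi fun _ : Fin n => bern ((k:ℝ)/n) with hμx
  set μU := Measure.pi fun _ : Fin n => uniformSphere d with hμU
  set μB := Measure.pi fun _ : EdgePair n => bern p with hμB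
  have hF : Measurable fun G : EdgeGraph n => ∏ e ∈ H, (edgeVal G e - p) := by
    apply Finset.measurable_prod
    intro e _
    exact ((measurable_of_countable (fun b : Bool => if b then (1:ℝ) else 0)).comp
      (measurable_pi_apply e)).sub measurable_const
  set C : ℝ := ∫ U : Fin n → EuclideanSpace ℝ (Fin d),
      ∏ e ∈ H, ((if τ ≤ ⟪U e.1.1, U e.1.2⟫_ℝ then (1:ℝ) else 0) - p) ∂μU with hC
  -- rgg side
  have hT2 : Measurable fun U : Fin n → EuclideanSpace ℝ (Fin d) =>
      (fun e : EdgePair n => if τ ≤ ⟪U e.1.1, U e.1.2⟫_ℝ then true else false) := by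
    apply measurable_pi_lambda
    intro e
    exact Measurable.ite (measurableSet_le measurable_const
      ((measurable_pi_apply _).inner (measurable_pi_apply _))) measurable_const measurable_const
  have hrgg : expect (rgg n d τ) (fun G => ∏ e ∈ H, (edgeVal G e - p)) = C := by
    rw [expect, rgg, integral_map hT2.aemeasurable hF.aestronglyMeasurable]
    refine integral_congr_ae (Filter.Eventually.of_forall fun U => ?_)
    refine Finset.prod_congr rfl fun e _ => ?_
    by_cases hcond : τ ≤ ⟪U e.1.1, U e.1.2⟫_ℝ <;> simp [edgeVal, hcond]
  rw [hrgg]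
  -- planted side
  set T : (Fin n → Bool) × (Fin n → EuclideanSpace ℝ (Fin d)) × (EdgePair n → Bool) → EdgeGraph n :=
    (fun ω =>
      fun e : EdgePair n =>
        if ω.1 e.1.1 && ω.1 e.1.2 then
          if τ ≤ ⟪ω.2.1 e.1.1, ω.2.1 e.1.2⟫_ℝ then true else false
        else ω.2.2 e) with hTdef
  have hT : Measurable T := by
    apply measurable_pi_lambda
    intro e
    have hcond : MeasurableSet {ω : (Fin n → Bool) × (Fin n → EuclideanSpace ℝ (Fin d)) ×
        (EdgePair n → Bool) | (ω.1 e.1.1 && ω.1 e.1.2) = true} := by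
      have heq : {ω : (Fin n → Bool) × (Fin n → EuclideanSpace ℝ (Fin d)) ×
          (EdgePair n → Bool) | (ω.1 e.1.1 && ω.1 e.1.2) = true}
          = ((fun ω : (Fin n → Bool) × (Fin n → EuclideanSpace ℝ (Fin d)) ×
              (EdgePair n → Bool) => ω.1 e.1.1) ⁻¹' {true})
            ∩ ((fun ω => ω.1 e.1.2) ⁻¹' {true}) := by
        ext ω
        simp [Bool.and_eq_true]
      rw [heq]
      exact (((measurable_pi_apply e.1.1).comp measurable_fst) (measurableSet_singleton true)).inter
        (((measurable_pi_apply e.1.2).comp measurable_fst) (measurableSet_singleton true))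
    refine Measurable.ite hcond ?_ ?_
    · refine Measurable.ite (measurableSet_le measurable_const
        (Measurable.inner ?_ ?_)) measurable_const measurable_const
      · exact Measurable.eval (measurable_snd.fst)
      · exact Measurable.eval (measurable_snd.fst)
    · exact (measurable_pi_apply e).comp (measurable_snd.comp measurable_snd)
  have hInt : Integrable (fun ω => ∏ e ∈ H, (edgeVal (T ω) e - p)) (μx.prod (μU.prod μB)) := by
    refine Integrable.mono' (integrable_const 1) ((hF.comp hT).aestronglyMeasurable)
      (Filter.Eventually.of_forall fun ω => ?_)
    rw [Real.norm_eq_abs, Finset.abs_prod]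
    refine Finset.prod_le_one (fun e _ => abs_nonneg _) (fun e _ => ?_)
    rw [abs_le]
    unfold edgeVal
    constructor <;> split <;> linarith
  have hplant : expect (plantedModel n k d p τ) (fun G => ∏ e ∈ H, (edgeVal G e - p))
      = ∫ ω, ∏ e ∈ H, (edgeVal (T ω) e - p) ∂(μx.prod (μU.prod μB)) := by
    rw [expect, plantedModel, integral_map hT.aemeasurable hF.aestronglyMeasurable]
  rw [hplant, MeasureTheory.integral_prod _ hInt]
  -- inner integral for fixed community assignment x
  have inner_eq : ∀ x : Fin n → Bool,
      (∫ q : (Fin n → EuclideanSpace ℝ (Fin d)) × (EdgePair n → Bool),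
        ∏ e ∈ H, (edgeVal (T (x, q)) e - p) ∂(μU.prod μB))
      = (∫ U, ∏ e ∈ H.filter (fun e => x e.1.1 = true ∧ x e.1.2 = true),
          ((if τ ≤ ⟪U e.1.1, U e.1.2⟫_ℝ then (1:ℝ) else 0) - p) ∂μU)
        * (if H.filter (fun e => ¬(x e.1.1 = true ∧ x e.1.2 = true)) = ∅ then (1:ℝ) else 0) := by
    intro x
    have split : ∀ q : (Fin n → EuclideanSpace ℝ (Fin d)) × (EdgePair n → Bool),
        ∏ e ∈ H, (edgeVal (T (x, q)) e - p)
        = (fun U : Fin n → EuclideanSpace ℝ (Fin d) =>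
            ∏ e ∈ H.filter (fun e => x e.1.1 = true ∧ x e.1.2 = true),
            ((if τ ≤ ⟪U e.1.1, U e.1.2⟫_ℝ then (1:ℝ) else 0) - p)) q.1
          * (fun B : EdgePair n → Bool =>
            ∏ e ∈ H.filter (fun e => ¬(x e.1.1 = true ∧ x e.1.2 = true)),
            ((if B e then (1:ℝ) else 0) - p)) q.2 := by
      intro q
      rw [← Finset.prod_filter_mul_prod_filter_not H (fun e => x e.1.1 = true ∧ x e.1.2 = true)]
      congr 1
      · refine Finset.prod_congr rfl fun e he => ?_
        rw [Finset.mem_filter] at he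
        simp [edgeVal, hTdef, he.2.1, he.2.2]
      · refine Finset.prod_congr rfl fun e he => ?_
        rw [Finset.mem_filter] at he
        simp [edgeVal, hTdef, he.2]
    rw [integral_congr_ae (Filter.Eventually.of_forall split),
      integral_prod_mul (μ := μU) (ν := μB)
        (fun U : Fin n → EuclideanSpace ℝ (Fin d) =>
          ∏ e ∈ H.filter (fun e => x e.1.1 = true ∧ x e.1.2 = true),
            ((if τ ≤ ⟪U e.1.1, U e.1.2⟫_ℝ then (1:ℝ) else 0) - p))
        (fun B : EdgePair n → Bool =>
          ∏ e ∈ H.filter (fun e => ¬(x e.1.1 = true ∧ x e.1.2 = true)),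
            ((if B e then (1:ℝ) else 0) - p)),
      hμB, integral_pi_signed_prod hp0 hp1]
  have point : ∀ x : Fin n → Bool,
      (∫ U, ∏ e ∈ H.filter (fun e => x e.1.1 = true ∧ x e.1.2 = true),
          ((if τ ≤ ⟪U e.1.1, U e.1.2⟫_ℝ then (1:ℝ) else 0) - p) ∂μU)
        * (if H.filter (fun e => ¬(x e.1.1 = true ∧ x e.1.2 = true)) = ∅ then (1:ℝ) else 0)
      = (∏ v ∈ vertexSet H, (if x v then (1:ℝ) else 0)) * C := by
    intro x
    by_cases h2 : H.filter (fun e => ¬(x e.1.1 = true ∧ x e.1.2 = true)) = ∅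
    · have hall : ∀ e ∈ H, x e.1.1 = true ∧ x e.1.2 = true := by
        intro e he
        by_contra hne
        exact (Finset.eq_empty_iff_forall_notMem.mp h2 e) (Finset.mem_filter.mpr ⟨he, hne⟩)
      have h1 : H.filter (fun e => x e.1.1 = true ∧ x e.1.2 = true) = H :=
        Finset.filter_true_of_mem hall
      have h3 : ∏ v ∈ vertexSet H, (if x v then (1:ℝ) else 0) = 1 := by
        refine Finset.prod_eq_one fun v hv => ?_
        rw [vertexSet, Finset.mem_biUnion] at hv
        obtain ⟨e, he, hv⟩ := hv
        have hxe := hall e he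
        simp only [Finset.mem_insert, Finset.mem_singleton] at hv
        rcases hv with rfl | rfl
        · simp [hxe.1]
        · simp [hxe.2]
      rw [h1, h2, h3, if_pos rfl, mul_one, one_mul]
    · obtain ⟨e, he⟩ := Finset.nonempty_iff_ne_empty.mpr h2
      rw [Finset.mem_filter] at he
      have hzero : ∏ v ∈ vertexSet H, (if x v then (1:ℝ) else 0) = 0 := by
        have : ∃ v ∈ vertexSet H, x v = false := by
          by_cases hx1 : x e.1.1 = true
          · refine ⟨e.1.2, Finset.mem_biUnion.mpr ⟨e, he.1, by simp⟩, ?_⟩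
            by_cases hx2 : x e.1.2 = true
            · exact absurd ⟨hx1, hx2⟩ he.2
            · exact Bool.eq_false_iff.mpr hx2
          · exact ⟨e.1.1, Finset.mem_biUnion.mpr ⟨e, he.1, by simp⟩,
              Bool.eq_false_iff.mpr hx1⟩
        obtain ⟨v, hv, hvf⟩ := this
        exact Finset.prod_eq_zero hv (by simp [hvf])
      rw [if_neg h2, hzero, mul_zero, zero_mul]
  calc ∫ x, ∫ q : (Fin n → EuclideanSpace ℝ (Fin d)) × (EdgePair n → Bool),
        ∏ e ∈ H, (edgeVal (T (x, q)) e - p) ∂(μU.prod μB) ∂μx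
      = ∫ x, (∏ v ∈ vertexSet H, (if x v then (1:ℝ) else 0)) * C ∂μx := by
        refine integral_congr_ae (Filter.Eventually.of_forall fun x => ?_)
        exact (inner_eq x).trans (point x)
    _ = (∫ x, ∏ v ∈ vertexSet H, (if x v then (1:ℝ) else 0) ∂μx) * C := by
        rw [integral_mul_const]
    _ = ((k:ℝ)/n) ^ (vertexSet H).card * C := by
        rw [hμx, integral_pi_indicator_prod hq0 hq1]
end
end

section
/- Let C₀ > 0 be an arbitrary constant. Suppose k ≤ n/5, k → ∞, and d ≫ k^2 ∨ k^6/n^3 (i.e., k^2/d → 0 and k^6/(n^3 d) → 0). For an integer s, let S and S' be independent uniformly random subsets of {1,…,n} of size s, and let N := |S ∩ S'|. Then max over s ∈ [⌊0.9k⌋, ⌈1.1k⌉] of E[exp(C₀ N^3 / d)] = 1 + o(1) as n → ∞. -/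
open Filter

noncomputable section

/-- The expectation `E[exp(C₀ |S ∩ S'|³ / d)]` for independent uniformly random
size-`s` subsets `S, S'` of `{1,…,n}`. -/
def hypergeomCubeMGF (n s d : ℕ) (C₀ : ℝ) : ℝ :=
  (∑ A ∈ Finset.powersetCard s (Finset.univ : Finset (Fin n)),
    ∑ B ∈ Finset.powersetCard s (Finset.univ : Finset (Fin n)),
      Real.exp (C₀ * ((A ∩ B).card : ℝ) ^ 3 / (d : ℝ))) / ((n.choose s : ℝ)) ^ 2

section Aux

open Finset Nat

theorem hgAux_descF_mul_pow_le {s n : ℕ} (h : s ≤ n) :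
    ∀ m, s.descFactorial m * n ^ m ≤ s ^ m * n.descFactorial m := by
  intro m
  induction m with
  | zero => simp
  | succ m ih =>
    rw [Nat.descFactorial_succ, Nat.descFactorial_succ, pow_succ, pow_succ]
    calc (s - m) * s.descFactorial m * (n ^ m * n)
        = ((s - m) * n) * (s.descFactorial m * n ^ m) := by ring
      _ ≤ (s * (n - m)) * (s ^ m * n.descFactorial m) := by
          apply Nat.mul_le_mul _ ih
          rw [Nat.sub_mul, Nat.mul_sub]
          exact Nat.sub_le_sub_left (by rw [Nat.mul_comm]; exact Nat.mul_le_mul_left m h) _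
      _ = s ^ m * s * ((n - m) * n.descFactorial m) := by ring

theorem hgAux_keyNat {n s m : ℕ} (hms : m ≤ s) (hsn : s ≤ n) :
    s.choose m * (n - s).choose (s - m) * m ! * n ^ m ≤ s ^ (2 * m) * n.choose s := by
  have hmn : m ≤ n := hms.trans hsn
  have hpos : 0 < n.choose m := Nat.choose_pos hmn
  refine Nat.le_of_mul_le_mul_right ?_ hpos
  have h1 : (n - s).choose (s - m) ≤ (n - m).choose (s - m) :=
    Nat.choose_le_choose _ (Nat.sub_le_sub_left hms n)
  have hid : n.choose s * s.choose m = n.choose m * (n - m).choose (s - m) :=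
    Nat.choose_mul hms
  have hdf : s.choose m * m ! = s.descFactorial m := by
    rw [Nat.descFactorial_eq_factorial_mul_choose, Nat.mul_comm]
  have hdfn : n.descFactorial m = m ! * n.choose m :=
    Nat.descFactorial_eq_factorial_mul_choose n m
  have hsp : s.descFactorial m ≤ s ^ m := Nat.descFactorial_le_pow s m
  calc s.choose m * (n - s).choose (s - m) * m ! * n ^ m * n.choose m
      ≤ s.choose m * (n - m).choose (s - m) * m ! * n ^ m * n.choose m := by
        gcongr
    _ = (n.choose m * (n - m).choose (s - m)) * (s.choose m * m ! * n ^ m) := by ring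
    _ = (n.choose s * s.choose m) * (s.descFactorial m * n ^ m) := by rw [← hid, hdf]
    _ ≤ (n.choose s * s.choose m) * (s ^ m * n.descFactorial m) :=
        Nat.mul_le_mul_left _ (hgAux_descF_mul_pow_le hsn m)
    _ = n.choose s * s ^ m * (s.choose m * m !) * n.choose m := by rw [hdfn]; ring
    _ ≤ n.choose s * s ^ m * s ^ m * n.choose m := by rw [hdf]; gcongr
    _ = s ^ (2 * m) * n.choose s * n.choose m := by rw [two_mul, pow_add]; ring

theorem hgAux_fiber_card_le {n s m : ℕ} (A : Finset (Fin n)) (hA : A.card = s) :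
    (((Finset.powersetCard s (Finset.univ : Finset (Fin n))).filter
        (fun B => (A ∩ B).card = m)).card : ℕ)
      ≤ s.choose m * (n - s).choose (s - m) := by
  have h : ((powersetCard m A) ×ˢ (powersetCard (s - m) Aᶜ)).card
      = s.choose m * (n - s).choose (s - m) := by
    rw [card_product, card_powersetCard, card_powersetCard, hA, card_compl,
      Fintype.card_fin, hA]
  rw [← h]
  apply Finset.card_le_card_of_injOn (fun B => (A ∩ B, B \ A))
  · intro B hB
    simp only [Finset.mem_coe, mem_filter, Finset.mem_powersetCard_univ] at hB
    obtain ⟨hBs, hBm⟩ := hB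
    simp only [Finset.mem_coe, Finset.mem_product, Finset.mem_powersetCard]
    refine ⟨⟨inter_subset_left, hBm⟩, ?_, ?_⟩
    · intro x hx
      simp only [Finset.mem_sdiff] at hx
      simp [Finset.mem_compl, hx.2]
    · have := Finset.card_inter_add_card_sdiff B A
      rw [Finset.inter_comm] at hBm
      omega
  · intro B₁ h₁ B₂ h₂ he
    simp only [Prod.mk.injEq] at he
    have e1 : B₁ \ A ∪ A ∩ B₁ = B₁ := by
      rw [Finset.inter_comm]; exact Finset.sdiff_union_inter B₁ A
    have e2 : B₂ \ A ∪ A ∩ B₂ = B₂ := by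
      rw [Finset.inter_comm]; exact Finset.sdiff_union_inter B₂ A
    rw [← e1, ← e2, he.1, he.2]

theorem hgAux_prob_le {n s m : ℕ} (hms : m ≤ s) (hsn : s ≤ n) (hn : 0 < n) :
    ((s.choose m * (n - s).choose (s - m) : ℕ) : ℝ) / (n.choose s : ℝ)
      ≤ ((s : ℝ) ^ 2 / n) ^ m / (m ! : ℝ) := by
  have hc : (0 : ℝ) < (n.choose s : ℝ) := by
    exact_mod_cast Nat.choose_pos hsn
  have hfm : (0 : ℝ) < (m ! : ℝ) := by exact_mod_cast Nat.factorial_pos m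
  have hnR : (0 : ℝ) < (n : ℝ) := by exact_mod_cast hn
  rw [div_pow, div_div, div_le_div_iff₀ hc (by positivity)]
  have h2 : (s.choose m * (n - s).choose (s - m) * m ! * n ^ m : ℝ)
      ≤ (s : ℝ) ^ (2 * m) * (n.choose s : ℝ) := by
    exact_mod_cast hgAux_keyNat hms hsn
  calc ((s.choose m * (n - s).choose (s - m) : ℕ) : ℝ) * ((n:ℝ) ^ m * (m ! : ℝ))
      = (s.choose m * (n - s).choose (s - m) * m ! * n ^ m : ℝ) := by push_cast; ring
    _ ≤ (s : ℝ) ^ (2 * m) * (n.choose s : ℝ) := h2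
    _ = ((s:ℝ) ^ 2) ^ m * (n.choose s : ℝ) := by rw [pow_mul]

theorem hgAux_pow_le_factorial_mul_exp (m : ℕ) : (m : ℝ) ^ m ≤ (m ! : ℝ) * Real.exp m := by
  have h : (m : ℝ) ^ m / (m ! : ℝ) ≤ Real.exp m := by
    refine le_trans ?_ (Real.sum_le_exp_of_nonneg (x := (m : ℝ)) (Nat.cast_nonneg m) (m + 1))
    exact Finset.single_le_sum (f := fun i => (m:ℝ)^i / (i ! : ℝ))
      (fun i _ => by positivity) (Finset.self_mem_range_succ m)
  have hfm : (0 : ℝ) < (m ! : ℝ) := by exact_mod_cast Nat.factorial_pos m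
  calc (m : ℝ) ^ m = (m : ℝ) ^ m / (m ! : ℝ) * (m ! : ℝ) := by field_simp
    _ ≤ Real.exp m * (m ! : ℝ) := by gcongr
    _ = _ := by ring

theorem hgAux_term_le {a ε : ℝ} (ha : 0 < a) (hε : 0 ≤ ε) (hε1 : ε ≤ 1) {m : ℕ}
    (hm : 16 * a ≤ m) (hm1 : 1 ≤ m) :
    a ^ m / (m ! : ℝ) * Real.exp (ε * m) ≤ (1 / 2 : ℝ) ^ m := by
  have hmp : (0 : ℝ) < m := by exact_mod_cast hm1
  have hfm : (0 : ℝ) < (m ! : ℝ) := by exact_mod_cast Nat.factorial_pos m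
  have hexp1 : Real.exp 1 ^ m = Real.exp m := by
    rw [← Real.exp_nat_mul, mul_one]
  have h1 : a ^ m / (m ! : ℝ) ≤ (Real.exp 1 * a / m) ^ m := by
    rw [div_pow, mul_pow, div_le_div_iff₀ hfm (by positivity)]
    rw [hexp1]
    calc a ^ m * (m : ℝ) ^ m ≤ a ^ m * ((m ! : ℝ) * Real.exp m) := by
          have := hgAux_pow_le_factorial_mul_exp m
          gcongr
      _ = Real.exp (m : ℝ) * a ^ m * (m ! : ℝ) := by ring
  have h2 : Real.exp (ε * m) = Real.exp ε ^ m := by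
    rw [← Real.exp_nat_mul, mul_comm]
  have hea : Real.exp 1 * Real.exp ε ≤ 8 := by
    rw [← Real.exp_add]
    calc Real.exp (1 + ε) ≤ Real.exp 2 := Real.exp_le_exp.2 (by linarith)
      _ = Real.exp 1 ^ 2 := by rw [← Real.exp_nat_mul, mul_one]; norm_num
      _ ≤ 2.7182818286 ^ 2 := by
          have := Real.exp_one_lt_d9
          gcongr
      _ ≤ 8 := by norm_num
  have hbase0 : 0 ≤ Real.exp 1 * a / m * Real.exp ε := by positivity
  have hbase : Real.exp 1 * a / m * Real.exp ε ≤ 1 / 2 := by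
    rw [div_mul_eq_mul_div, div_le_iff₀ hmp]
    calc Real.exp 1 * a * Real.exp ε = (Real.exp 1 * Real.exp ε) * a := by ring
      _ ≤ 8 * a := by gcongr
      _ = 1 / 2 * (16 * a) := by ring
      _ ≤ 1 / 2 * m := by linarith
  calc a ^ m / (m ! : ℝ) * Real.exp (ε * m)
      ≤ (Real.exp 1 * a / m) ^ m * Real.exp ε ^ m := by
        rw [h2]
        have hexpε : (0:ℝ) ≤ Real.exp ε ^ m := by positivity
        gcongr
    _ = (Real.exp 1 * a / m * Real.exp ε) ^ m := by rw [← mul_pow]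
    _ ≤ (1 / 2 : ℝ) ^ m := pow_le_pow_left₀ hbase0 hbase m

theorem hgAux_geom_Icc (M s : ℕ) :
    ∑ m ∈ Finset.Icc (M + 1) s, (1 / 2 : ℝ) ^ m ≤ (1 / 2) ^ M := by
  rcases le_or_gt (M + 1) (s + 1) with h | h
  · rw [← Finset.Ico_add_one_right_eq_Icc, geom_sum_Ico (by norm_num : (1/2:ℝ) ≠ 1) h]
    have h1 : (0:ℝ) < (1/2:ℝ) ^ (s+1) := by positivity
    have h2 : ((1/2:ℝ)) ^ (M+1) = (1/2) * (1/2)^M := by rw [pow_succ]; ring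
    rw [div_le_iff_of_neg (by norm_num : (1/2:ℝ) - 1 < 0)]
    nlinarith [pow_nonneg (by norm_num : (0:ℝ) ≤ 1/2) M]
  · rw [Finset.Icc_eq_empty (by omega)]
    simp

theorem hgAux_one_le_mgf {n s d : ℕ} {C₀ : ℝ} (hC₀ : 0 ≤ C₀) (hsn : s ≤ n) :
    1 ≤ hypergeomCubeMGF n s d C₀ := by
  have hc : (0 : ℝ) < (n.choose s : ℝ) := by exact_mod_cast Nat.choose_pos hsn
  rw [hypergeomCubeMGF, le_div_iff₀ (by positivity)]
  have hP : (Finset.powersetCard s (Finset.univ : Finset (Fin n))).card = n.choose s := by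
    rw [Finset.card_powersetCard, Finset.card_univ, Fintype.card_fin]
  calc 1 * ((n.choose s : ℝ)) ^ 2 = ∑ _A ∈ Finset.powersetCard s (Finset.univ : Finset (Fin n)),
        ∑ _B ∈ Finset.powersetCard s (Finset.univ : Finset (Fin n)), (1:ℝ) := by
        simp [hP]; ring
    _ ≤ _ := by
        refine Finset.sum_le_sum fun A _ => Finset.sum_le_sum fun B _ => ?_
        exact Real.one_le_exp (by positivity)

theorem hgAux_mgf_dzero {n s : ℕ} (hsn : s ≤ n) (C₀ : ℝ) :
    hypergeomCubeMGF n s 0 C₀ = 1 := by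
  have hc : (0 : ℝ) < (n.choose s : ℝ) := by exact_mod_cast Nat.choose_pos hsn
  have hP : (Finset.powersetCard s (Finset.univ : Finset (Fin n))).card = n.choose s := by
    rw [Finset.card_powersetCard, Finset.card_univ, Fintype.card_fin]
  rw [hypergeomCubeMGF]
  simp only [Nat.cast_zero, div_zero, Real.exp_zero, Finset.sum_const, nsmul_eq_mul,
    mul_one, hP]
  rw [← sq, div_self (by positivity)]

theorem hgAux_mgf_le {n s d M : ℕ} {C₀ : ℝ} (hC₀ : 0 < C₀) (hn : 0 < n) (hsn : s ≤ n)
    (hd : 0 < d) (hM : 16 * ((s : ℝ) ^ 2 / n) ≤ M) (hε1 : C₀ * (s : ℝ) ^ 2 / d ≤ 1) :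
    hypergeomCubeMGF n s d C₀ ≤ Real.exp (C₀ * (M : ℝ) ^ 3 / d) + (1 / 2 : ℝ) ^ M := by
  set P := Finset.powersetCard s (Finset.univ : Finset (Fin n)) with hPdef
  have hP : P.card = n.choose s := by
    rw [hPdef, Finset.card_powersetCard, Finset.card_univ, Fintype.card_fin]
  have hc : (0 : ℝ) < (n.choose s : ℝ) := by exact_mod_cast Nat.choose_pos hsn
  have hdR : (0 : ℝ) < (d : ℝ) := by exact_mod_cast hd
  have hnR : (0 : ℝ) < (n : ℝ) := by exact_mod_cast hn
  have inner : ∀ A ∈ P, (∑ B ∈ P, Real.exp (C₀ * ((A ∩ B).card : ℝ) ^ 3 / (d : ℝ)))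
      ≤ (n.choose s : ℝ) * (Real.exp (C₀ * (M : ℝ) ^ 3 / d) + (1 / 2 : ℝ) ^ M) := by
    intro A hA
    have hAcard : A.card = s := (Finset.mem_powersetCard_univ.1 hA)
    rw [← Finset.sum_filter_add_sum_filter_not P (fun B => (A ∩ B).card ≤ M)]
    have part1 : (∑ B ∈ P.filter (fun B => (A ∩ B).card ≤ M),
        Real.exp (C₀ * ((A ∩ B).card : ℝ) ^ 3 / (d : ℝ)))
        ≤ (n.choose s : ℝ) * Real.exp (C₀ * (M : ℝ) ^ 3 / d) := by
      calc (∑ B ∈ P.filter (fun B => (A ∩ B).card ≤ M),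
            Real.exp (C₀ * ((A ∩ B).card : ℝ) ^ 3 / (d : ℝ)))
          ≤ ∑ _B ∈ P.filter (fun B => (A ∩ B).card ≤ M),
            Real.exp (C₀ * (M : ℝ) ^ 3 / d) := by
            refine Finset.sum_le_sum fun B hB => ?_
            have hBM : (A ∩ B).card ≤ M := (Finset.mem_filter.1 hB).2
            have : ((A ∩ B).card : ℝ) ≤ (M : ℝ) := by exact_mod_cast hBM
            refine Real.exp_le_exp.2 ?_
            gcongr
        _ = ((P.filter (fun B => (A ∩ B).card ≤ M)).card : ℝ)
              * Real.exp (C₀ * (M : ℝ) ^ 3 / d) := by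
            rw [Finset.sum_const, nsmul_eq_mul]
        _ ≤ (n.choose s : ℝ) * Real.exp (C₀ * (M : ℝ) ^ 3 / d) := by
            gcongr
            exact_mod_cast hP ▸ Finset.card_le_card (Finset.filter_subset _ _)
    have part2 : (∑ B ∈ P.filter (fun B => ¬ (A ∩ B).card ≤ M),
        Real.exp (C₀ * ((A ∩ B).card : ℝ) ^ 3 / (d : ℝ)))
        ≤ (n.choose s : ℝ) * (1 / 2 : ℝ) ^ M := by
      set Q := P.filter (fun B => ¬ (A ∩ B).card ≤ M) with hQdef
      have hmaps : ∀ B ∈ Q, (A ∩ B).card ∈ Finset.Icc (M + 1) s := by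
        intro B hB
        rw [hQdef, Finset.mem_filter] at hB
        have hBs : B.card = s := Finset.mem_powersetCard_univ.1 hB.1
        have : (A ∩ B).card ≤ s := hBs ▸ Finset.card_le_card Finset.inter_subset_right
        exact Finset.mem_Icc.2 ⟨by omega, this⟩
      rw [← Finset.sum_fiberwise_of_maps_to hmaps]
      have step : ∀ m ∈ Finset.Icc (M + 1) s,
          (∑ B ∈ Q.filter (fun B => (A ∩ B).card = m),
            Real.exp (C₀ * ((A ∩ B).card : ℝ) ^ 3 / (d : ℝ)))
          ≤ (n.choose s : ℝ) * (1 / 2 : ℝ) ^ m := by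
        intro m hm
        obtain ⟨hm1, hms⟩ := Finset.mem_Icc.1 hm
        have hs1 : 1 ≤ s := le_trans (by omega) hms
        have heq : (∑ B ∈ Q.filter (fun B => (A ∩ B).card = m),
            Real.exp (C₀ * ((A ∩ B).card : ℝ) ^ 3 / (d : ℝ)))
            = ((Q.filter (fun B => (A ∩ B).card = m)).card : ℝ)
              * Real.exp (C₀ * (m : ℝ) ^ 3 / d) := by
          rw [Finset.sum_congr rfl (fun B hB => by
            rw [(Finset.mem_filter.1 hB).2]), Finset.sum_const, nsmul_eq_mul]
        rw [heq]
        have hfib : ((Q.filter (fun B => (A ∩ B).card = m)).card : ℕ)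
            ≤ s.choose m * (n - s).choose (s - m) := by
          refine le_trans (Finset.card_le_card ?_) (hgAux_fiber_card_le A hAcard)
          intro B hB
          rw [Finset.mem_filter] at hB ⊢
          exact ⟨(Finset.mem_filter.1 hB.1).1, hB.2⟩
        have h3 := hgAux_prob_le hms hsn hn
        have h4 : Real.exp (C₀ * (m : ℝ) ^ 3 / d) ≤ Real.exp ((C₀ * (s : ℝ) ^ 2 / d) * m) := by
          refine Real.exp_le_exp.2 ?_
          have hmsR : (m : ℝ) ≤ (s : ℝ) := by exact_mod_cast hms
          calc C₀ * (m : ℝ) ^ 3 / d = C₀ * ((m : ℝ) ^ 2 * m) / d := by ring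
            _ ≤ C₀ * ((s : ℝ) ^ 2 * m) / d := by gcongr
            _ = (C₀ * (s : ℝ) ^ 2 / d) * m := by ring
        have hsR : (0 : ℝ) < (s : ℝ) := by exact_mod_cast hs1
        have ha : (0 : ℝ) < (s : ℝ) ^ 2 / n := by positivity
        have hε0 : (0 : ℝ) ≤ C₀ * (s : ℝ) ^ 2 / d := by positivity
        have hm16 : 16 * ((s : ℝ) ^ 2 / n) ≤ (m : ℝ) := by
          refine le_trans hM ?_
          exact_mod_cast Nat.le_of_succ_le hm1
        have hterm := hgAux_term_le ha hε0 hε1 hm16 (by omega : 1 ≤ m)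
        calc ((Q.filter (fun B => (A ∩ B).card = m)).card : ℝ)
              * Real.exp (C₀ * (m : ℝ) ^ 3 / d)
            ≤ ((s.choose m * (n - s).choose (s - m) : ℕ) : ℝ)
              * Real.exp (C₀ * (m : ℝ) ^ 3 / d) := by
              have : ((Q.filter (fun B => (A ∩ B).card = m)).card : ℝ)
                  ≤ ((s.choose m * (n - s).choose (s - m) : ℕ) : ℝ) := by exact_mod_cast hfib
              exact mul_le_mul_of_nonneg_right this (Real.exp_pos _).le
          _ = (n.choose s : ℝ) * (((s.choose m * (n - s).choose (s - m) : ℕ) : ℝ)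
              / (n.choose s : ℝ) * Real.exp (C₀ * (m : ℝ) ^ 3 / d)) := by
              field_simp
          _ ≤ (n.choose s : ℝ) * (((s : ℝ) ^ 2 / n) ^ m / (m ! : ℝ)
              * Real.exp ((C₀ * (s : ℝ) ^ 2 / d) * m)) := by
              refine mul_le_mul_of_nonneg_left ?_ hc.le
              exact mul_le_mul h3 h4 (Real.exp_pos _).le (by positivity)
          _ ≤ (n.choose s : ℝ) * (1 / 2 : ℝ) ^ m :=
              mul_le_mul_of_nonneg_left hterm hc.le
      calc (∑ m ∈ Finset.Icc (M + 1) s, ∑ B ∈ Q.filter (fun B => (A ∩ B).card = m),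
            Real.exp (C₀ * ((A ∩ B).card : ℝ) ^ 3 / (d : ℝ)))
          ≤ ∑ m ∈ Finset.Icc (M + 1) s, (n.choose s : ℝ) * (1 / 2 : ℝ) ^ m :=
            Finset.sum_le_sum step
        _ = (n.choose s : ℝ) * ∑ m ∈ Finset.Icc (M + 1) s, (1 / 2 : ℝ) ^ m := by
            rw [Finset.mul_sum]
        _ ≤ (n.choose s : ℝ) * (1 / 2 : ℝ) ^ M := by
            gcongr
            exact hgAux_geom_Icc M s
    linarith [part1, part2]
  rw [hypergeomCubeMGF, div_le_iff₀ (by positivity)]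
  calc (∑ A ∈ P, ∑ B ∈ P, Real.exp (C₀ * ((A ∩ B).card : ℝ) ^ 3 / (d : ℝ)))
      ≤ ∑ _A ∈ P, (n.choose s : ℝ) * (Real.exp (C₀ * (M : ℝ) ^ 3 / d) + (1 / 2 : ℝ) ^ M) :=
        Finset.sum_le_sum inner
    _ = (P.card : ℝ) * ((n.choose s : ℝ) * (Real.exp (C₀ * (M : ℝ) ^ 3 / d) + (1 / 2 : ℝ) ^ M)) := by
        rw [Finset.sum_const, nsmul_eq_mul]
    _ = (Real.exp (C₀ * (M : ℝ) ^ 3 / d) + (1 / 2 : ℝ) ^ M) * ((n.choose s : ℝ)) ^ 2 := by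
        rw [hP]; ring

/-- auxiliary: fourth-root-ish quantity -/
def hgQ (x y : ℕ) : ℕ := Nat.sqrt (Nat.sqrt (max x y))

/-- auxiliary: the threshold used in the MGF bound -/
noncomputable def hgM (n kn dn : ℕ) : ℕ :=
  Nat.ceil ((16 : ℝ) * (((Nat.ceil ((1.1 : ℝ) * kn) : ℕ) : ℝ) ^ 2 / (n : ℝ))) + hgQ dn kn

theorem hgQ_le (x y : ℕ) : hgQ x y ^ 4 ≤ max x y := by
  have h1 : hgQ x y * hgQ x y ≤ Nat.sqrt (max x y) := Nat.sqrt_le _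
  have h2 : Nat.sqrt (max x y) * Nat.sqrt (max x y) ≤ max x y := Nat.sqrt_le _
  calc hgQ x y ^ 4 = (hgQ x y * hgQ x y) * (hgQ x y * hgQ x y) := by ring
    _ ≤ Nat.sqrt (max x y) * Nat.sqrt (max x y) := Nat.mul_le_mul h1 h1
    _ ≤ max x y := h2

theorem hgM_ge (n kn dn : ℕ) :
    16 * (((Nat.ceil ((1.1 : ℝ) * kn) : ℕ) : ℝ) ^ 2 / (n : ℝ)) ≤ (hgM n kn dn : ℝ) := by
  refine le_trans (Nat.le_ceil _) ?_
  have h : (Nat.ceil ((16 : ℝ) * (((Nat.ceil ((1.1 : ℝ) * kn) : ℕ) : ℝ) ^ 2 / (n : ℝ))) : ℕ)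
      ≤ hgM n kn dn := Nat.le_add_right _ _
  exact_mod_cast h
set_option maxHeartbeats 1000000 in
theorem hgAux_E_bound {C₀ : ℝ} (hC₀ : 0 < C₀) (n kn dn : ℕ)
    (hk2 : 2 ≤ kn) (hk5 : (kn : ℝ) ≤ (n : ℝ) / 5) (hd1 : (kn : ℝ) ^ 2 / (dn : ℝ) < 1) :
    C₀ * ((hgM n kn dn : ℕ) : ℝ) ^ 3 / (dn : ℝ)
      ≤ (2 ^ 22 * C₀) * ((kn : ℝ) ^ 6 / ((n : ℝ) ^ 3 * dn))
        + ((4 * C₀) * ((kn : ℝ) ^ 2 / dn) + (4 * C₀) * (1 / (hgQ dn kn : ℝ))) := by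
  have hkR : (2 : ℝ) ≤ (kn : ℝ) := by exact_mod_cast hk2
  have hnR : (0 : ℝ) < (n : ℝ) := by linarith
  rcases Nat.eq_zero_or_pos dn with hd0 | hdpos
  · rw [hd0]
    simp only [Nat.cast_zero, div_zero, mul_zero]
    positivity
  · have hdR : (0 : ℝ) < (dn : ℝ) := by exact_mod_cast hdpos
    have hkd : (kn : ℝ) ^ 2 < dn := by rwa [div_lt_one hdR] at hd1
    have hkdN : kn ^ 2 ≤ dn := by
      have : ((kn ^ 2 : ℕ) : ℝ) < (dn : ℝ) := by push_cast; exact hkd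
      exact_mod_cast this.le
    have hkk : kn ≤ kn ^ 2 := by
      calc kn = kn * 1 := (Nat.mul_one kn).symm
        _ ≤ kn * kn := Nat.mul_le_mul_left kn (by omega)
        _ = kn ^ 2 := (sq kn).symm
    have hmax : max dn kn = dn := max_eq_left (le_trans hkk hkdN)
    have hq4 : hgQ dn kn ^ 4 ≤ dn := le_trans (hgQ_le dn kn) (le_of_eq hmax)
    have hq1 : 1 ≤ hgQ dn kn := by
      rw [hgQ]
      refine Nat.le_sqrt.2 (Nat.le_sqrt.2 ?_)
      have h4 : 4 ≤ kn ^ 2 := by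
        calc 4 = 2 ^ 2 := rfl
          _ ≤ kn ^ 2 := Nat.pow_le_pow_left hk2 2
      have : 4 ≤ dn := le_trans h4 hkdN
      calc 1 * 1 * (1 * 1) = 1 := by norm_num
        _ ≤ max dn kn := by rw [hmax]; omega
    set Q : ℝ := (hgQ dn kn : ℝ) with hQdef
    have hQR : (1 : ℝ) ≤ Q := by rw [hQdef]; exact_mod_cast hq1
    set u : ℕ := Nat.ceil ((1.1 : ℝ) * kn) with hudef
    have hub2k : (u : ℝ) ≤ 2 * kn := by
      have h : u ≤ 2 * kn := by
        refine Nat.ceil_le.2 ?_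
        push_cast
        have : (0 : ℝ) ≤ (kn : ℝ) := Nat.cast_nonneg _
        linarith
      calc (u : ℝ) ≤ ((2 * kn : ℕ) : ℝ) := by exact_mod_cast h
        _ = 2 * kn := by push_cast; ring
    set a : ℝ := ((u : ℕ) : ℝ) ^ 2 / n with hadef
    have ha0 : (0 : ℝ) ≤ a := by positivity
    have hMle : ((hgM n kn dn : ℕ) : ℝ) ≤ 16 * a + 1 + Q := by
      have hceil : ((Nat.ceil ((16 : ℝ) * a) : ℕ) : ℝ) ≤ 16 * a + 1 :=
        (Nat.ceil_lt_add_one (by positivity)).le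
      have heq : ((hgM n kn dn : ℕ) : ℝ) = ((Nat.ceil ((16 : ℝ) * a) : ℕ) : ℝ) + Q := by
        rw [hgM]; push_cast; rw [← hudef, ← hadef, ← hQdef]
      rw [heq]; linarith
    have hM3 : ((hgM n kn dn : ℕ) : ℝ) ^ 3 ≤ 4 * (16 * a + 1) ^ 3 + 4 * Q ^ 3 := by
      have h0 : (0 : ℝ) ≤ ((hgM n kn dn : ℕ) : ℝ) := Nat.cast_nonneg _
      have hQ0 : (0 : ℝ) ≤ Q := by linarith
      have hx : (0 : ℝ) ≤ 16 * a + 1 := by linarith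
      have hcube : ((hgM n kn dn : ℕ) : ℝ) ^ 3 ≤ (16 * a + 1 + Q) ^ 3 :=
        pow_le_pow_left₀ h0 hMle 3
      nlinarith [sq_nonneg (16 * a + 1 - Q), mul_nonneg hx hQ0,
        mul_nonneg (mul_nonneg hx hx) hQ0, mul_nonneg (mul_nonneg hQ0 hQ0) hx]
    have hX3 : (16 * a + 1) ^ 3 ≤ 16384 * a ^ 3 + 4 := by
      nlinarith [sq_nonneg (16 * a - 1), ha0, mul_nonneg ha0 ha0,
        mul_nonneg (mul_nonneg ha0 ha0) ha0]
    have haK : a ≤ 4 * ((kn : ℝ) ^ 2 / n) := by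
      rw [hadef]
      have hu0 : (0 : ℝ) ≤ (u : ℝ) := Nat.cast_nonneg _
      have hsq : ((u : ℕ) : ℝ) ^ 2 ≤ (2 * (kn : ℝ)) ^ 2 := by nlinarith
      calc ((u : ℕ) : ℝ) ^ 2 / n ≤ (2 * (kn : ℝ)) ^ 2 / n := by gcongr
        _ = 4 * ((kn : ℝ) ^ 2 / n) := by ring
    have ha3 : a ^ 3 ≤ 64 * ((kn : ℝ) ^ 6 / (n : ℝ) ^ 3) := by
      calc a ^ 3 ≤ (4 * ((kn : ℝ) ^ 2 / n)) ^ 3 := pow_le_pow_left₀ ha0 haK 3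
        _ = 64 * ((kn : ℝ) ^ 6 / (n : ℝ) ^ 3) := by
            field_simp
            ring
    have hM3' : ((hgM n kn dn : ℕ) : ℝ) ^ 3
        ≤ 2 ^ 22 * ((kn : ℝ) ^ 6 / (n : ℝ) ^ 3) + 16 + 4 * Q ^ 3 := by
      calc ((hgM n kn dn : ℕ) : ℝ) ^ 3 ≤ 4 * (16 * a + 1) ^ 3 + 4 * Q ^ 3 := hM3
        _ ≤ 4 * (16384 * a ^ 3 + 4) + 4 * Q ^ 3 := by nlinarith
        _ ≤ 4 * (16384 * (64 * ((kn : ℝ) ^ 6 / (n : ℝ) ^ 3)) + 4) + 4 * Q ^ 3 := by nlinarith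
        _ = 2 ^ 22 * ((kn : ℝ) ^ 6 / (n : ℝ) ^ 3) + 16 + 4 * Q ^ 3 := by ring
    have hq3d : Q ^ 3 / dn ≤ 1 / Q := by
      rw [div_le_div_iff₀ hdR (by linarith)]
      have h4 : Q ^ 4 ≤ (dn : ℝ) := by
        rw [hQdef]
        exact_mod_cast hq4
      
      calc Q ^ 3 * Q = Q ^ 4 := by ring
        _ ≤ (dn : ℝ) := h4
        _ = 1 * (dn : ℝ) := by ring
    have h16d : 16 / (dn : ℝ) ≤ 4 * ((kn : ℝ) ^ 2 / dn) := by
      rw [div_le_iff₀ hdR]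
      have h4 : (4 : ℝ) ≤ (kn : ℝ) ^ 2 := by nlinarith
      calc (16 : ℝ) ≤ 4 * (kn : ℝ) ^ 2 := by linarith
        _ = 4 * ((kn : ℝ) ^ 2 / dn) * dn := by field_simp
    calc C₀ * ((hgM n kn dn : ℕ) : ℝ) ^ 3 / dn
        ≤ C₀ * (2 ^ 22 * ((kn : ℝ) ^ 6 / (n : ℝ) ^ 3) + 16 + 4 * Q ^ 3) / dn := by gcongr
      _ = (2 ^ 22 * C₀) * (((kn : ℝ) ^ 6 / (n : ℝ) ^ 3) / dn)
          + C₀ * (16 / dn) + (4 * C₀) * (Q ^ 3 / dn) := by ring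
      _ ≤ (2 ^ 22 * C₀) * ((kn : ℝ) ^ 6 / ((n : ℝ) ^ 3 * dn))
          + C₀ * (4 * ((kn : ℝ) ^ 2 / dn)) + (4 * C₀) * (1 / Q) := by
          rw [div_div]
          gcongr
      _ = (2 ^ 22 * C₀) * ((kn : ℝ) ^ 6 / ((n : ℝ) ^ 3 * dn))
          + ((4 * C₀) * ((kn : ℝ) ^ 2 / dn) + (4 * C₀) * (1 / Q)) := by ring
set_option maxHeartbeats 1000000 in
theorem hgAux_sup_bounds {C₀ : ℝ} (hC₀ : 0 < C₀) (n kn dn Mn : ℕ)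
    (hk2 : 2 ≤ kn) (hk5 : (kn : ℝ) ≤ (n : ℝ) / 5)
    (hd : dn = 0 ∨ kn ^ 2 ≤ dn)
    (hd4 : C₀ * (2 * (kn : ℝ)) ^ 2 / dn ≤ 1)
    (hM : 16 * (((Nat.ceil ((1.1 : ℝ) * kn) : ℕ) : ℝ) ^ 2 / n) ≤ (Mn : ℝ)) :
    1 ≤ sSup {x : ℝ | ∃ s : ℕ, Nat.floor ((0.9 : ℝ) * kn) ≤ s ∧
          s ≤ Nat.ceil ((1.1 : ℝ) * kn) ∧ x = hypergeomCubeMGF n s dn C₀}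
    ∧ sSup {x : ℝ | ∃ s : ℕ, Nat.floor ((0.9 : ℝ) * kn) ≤ s ∧
          s ≤ Nat.ceil ((1.1 : ℝ) * kn) ∧ x = hypergeomCubeMGF n s dn C₀}
      ≤ Real.exp (C₀ * (Mn : ℝ) ^ 3 / dn) + (1 / 2 : ℝ) ^ Mn := by
  have hkR : (2 : ℝ) ≤ (kn : ℝ) := by exact_mod_cast hk2
  have hnR : (10 : ℝ) ≤ (n : ℝ) := by linarith
  have hn0 : 0 < n := by exact_mod_cast (by linarith : (0 : ℝ) < (n : ℝ))
  set u : ℕ := Nat.ceil ((1.1 : ℝ) * kn) with hudef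
  set lo : ℕ := Nat.floor ((0.9 : ℝ) * kn) with hlodef
  have hu2k : (u : ℝ) ≤ 2 * kn := by
    have h : u ≤ 2 * kn := by
      refine Nat.ceil_le.2 ?_
      push_cast
      have : (0 : ℝ) ≤ (kn : ℝ) := Nat.cast_nonneg _
      linarith
    calc (u : ℝ) ≤ ((2 * kn : ℕ) : ℝ) := by exact_mod_cast h
      _ = 2 * kn := by push_cast; ring
  have hun : u ≤ n := by
    have : (u : ℝ) ≤ (n : ℝ) := by linarith
    exact_mod_cast this
  have hlou : lo ≤ u := by
    have h1 : lo ≤ Nat.floor ((1.1 : ℝ) * kn) := by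
      refine Nat.floor_le_floor ?_
      have : (0 : ℝ) ≤ (kn : ℝ) := Nat.cast_nonneg _
      nlinarith
    exact le_trans h1 (Nat.floor_le_ceil _)
  set S : Set ℝ := {x : ℝ | ∃ s : ℕ, lo ≤ s ∧ s ≤ u ∧ x = hypergeomCubeMGF n s dn C₀}
    with hSdef
  have mem₀ : hypergeomCubeMGF n lo dn C₀ ∈ S := ⟨lo, le_rfl, hlou, rfl⟩
  have bound : ∀ x ∈ S, x ≤ Real.exp (C₀ * (Mn : ℝ) ^ 3 / dn) + (1 / 2 : ℝ) ^ Mn := by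
    rintro x ⟨s, hs1, hs2, rfl⟩
    have hsn : s ≤ n := le_trans hs2 hun
    rcases hd with hd0 | hkd
    · rw [hd0, hgAux_mgf_dzero hsn]
      have h1 : (1 : ℝ) ≤ Real.exp (C₀ * (Mn : ℝ) ^ 3 / ((0 : ℕ) : ℝ)) :=
        Real.one_le_exp (by positivity)
      have h2 : (0 : ℝ) < (1 / 2 : ℝ) ^ Mn := by positivity
      linarith
    · have hdpos : 0 < dn := by
        have h4 : 4 ≤ kn ^ 2 := by
          calc 4 = 2 ^ 2 := rfl
            _ ≤ kn ^ 2 := Nat.pow_le_pow_left hk2 2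
        omega
      have hsu : (s : ℝ) ≤ (u : ℝ) := by exact_mod_cast hs2
      have hdnR : (0 : ℝ) < (dn : ℝ) := by exact_mod_cast hdpos
      refine hgAux_mgf_le hC₀ hn0 hsn hdpos ?_ ?_
      · refine le_trans ?_ hM
        have hnpos : (0 : ℝ) < (n : ℝ) := by linarith
        have h0 : (s : ℝ) ^ 2 ≤ (u : ℝ) ^ 2 := pow_le_pow_left₀ (Nat.cast_nonneg _) hsu 2
        exact mul_le_mul_of_nonneg_left ((div_le_div_iff_of_pos_right hnpos).2 h0) (by norm_num)
      · have hsq : (s : ℝ) ^ 2 ≤ (2 * (kn : ℝ)) ^ 2 :=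
          pow_le_pow_left₀ (Nat.cast_nonneg _) (by linarith) 2
        calc C₀ * (s : ℝ) ^ 2 / dn ≤ C₀ * (2 * (kn : ℝ)) ^ 2 / dn :=
            (div_le_div_iff_of_pos_right hdnR).2 (mul_le_mul_of_nonneg_left hsq hC₀.le)
          _ ≤ 1 := hd4
  have bdd : BddAbove S := ⟨_, bound⟩
  constructor
  · exact le_trans (hgAux_one_le_mgf hC₀.le (le_trans hlou hun)) (le_csSup bdd mem₀)
  · exact csSup_le ⟨_, mem₀⟩ bound
end Aux

/-- **Upper bound on the cubed hypergeometric MGF** (Lemma 5.3): for any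
constant `C₀ > 0`, if `k ≤ n/5` and `d ≫ k² ∨ k⁶/n³`, then
`max_{s ∈ [⌊0.9k⌋, ⌈1.1k⌉]} E[exp(C₀ N³/d)] = 1 + o(1)` where
`N = |S ∩ S'|` for independent uniform size-`s` subsets `S, S'`. -/
theorem hypergeometric_cube_mgf_bound (C₀ : ℝ) (hC₀ : 0 < C₀) :
    ∀ (k d : ℕ → ℕ),
      Tendsto (fun n => (k n : ℝ)) atTop atTop →
      (∀ n : ℕ, (k n : ℝ) ≤ (n : ℝ) / 5) →
      Tendsto (fun n => (k n : ℝ) ^ 2 / (d n : ℝ)) atTop (nhds 0) →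
      Tendsto (fun n => (k n : ℝ) ^ 6 / ((n : ℝ) ^ 3 * (d n : ℝ))) atTop (nhds 0) →
      Tendsto (fun n => sSup {x : ℝ | ∃ s : ℕ,
          Nat.floor ((0.9 : ℝ) * k n) ≤ s ∧ s ≤ Nat.ceil ((1.1 : ℝ) * k n) ∧
          x = hypergeomCubeMGF n s (d n) C₀})
        atTop (nhds 1) := by
  intro k d hk hk5 h2 h6
  have hkN : Tendsto k atTop atTop := tendsto_natCast_atTop_iff.1 hk
  have hqT : Tendsto (fun n => hgQ (d n) (k n)) atTop atTop := by
    rw [Filter.tendsto_atTop_atTop]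
    intro b
    obtain ⟨i, hi⟩ := (Filter.tendsto_atTop_atTop.1 hkN) (b * b * (b * b))
    refine ⟨i, fun a ha => ?_⟩
    have h1 : b * b * (b * b) ≤ max (d a) (k a) := le_trans (hi a ha) (le_max_right _ _)
    exact Nat.le_sqrt.2 (Nat.le_sqrt.2 h1)
  have hMT : Tendsto (fun n => hgM n (k n) (d n)) atTop atTop :=
    tendsto_atTop_mono (fun n => Nat.le_add_left _ _) hqT
  have hpow : Tendsto (fun n => (1 / 2 : ℝ) ^ (hgM n (k n) (d n))) atTop (nhds 0) :=
    (tendsto_pow_atTop_nhds_zero_of_lt_one (by norm_num) (by norm_num)).comp hMT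
  have hET : Tendsto (fun n => C₀ * ((hgM n (k n) (d n) : ℕ) : ℝ) ^ 3 / d n)
      atTop (nhds 0) := by
    have h1q : Tendsto (fun n : ℕ => 1 / ((hgQ (d n) (k n) : ℕ) : ℝ)) atTop (nhds 0) :=
      tendsto_one_div_atTop_nhds_zero_nat.comp hqT
    have hG : Tendsto (fun n => (2 ^ 22 * C₀) * ((k n : ℝ) ^ 6 / ((n : ℝ) ^ 3 * d n))
        + ((4 * C₀) * ((k n : ℝ) ^ 2 / d n)
          + (4 * C₀) * (1 / ((hgQ (d n) (k n) : ℕ) : ℝ))))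
        atTop (nhds 0) := by
      have := (h6.const_mul (2 ^ 22 * C₀)).add
        ((h2.const_mul (4 * C₀)).add (h1q.const_mul (4 * C₀)))
      simpa using this
    refine squeeze_zero' ?_ ?_ hG
    · filter_upwards with n
      positivity
    · filter_upwards [hkN.eventually_ge_atTop 2, h2.eventually (gt_mem_nhds one_pos)]
        with n hk2 hd1
      exact hgAux_E_bound hC₀ n (k n) (d n) hk2 (hk5 n) hd1
  have hBT : Tendsto (fun n => Real.exp (C₀ * ((hgM n (k n) (d n) : ℕ) : ℝ) ^ 3 / d n)
      + (1 / 2 : ℝ) ^ (hgM n (k n) (d n))) atTop (nhds 1) := by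
    have hexp : Tendsto (fun n => Real.exp (C₀ * ((hgM n (k n) (d n) : ℕ) : ℝ) ^ 3 / d n))
        atTop (nhds 1) := by
      have := (Real.continuous_exp.tendsto 0).comp hET
      simpa [Function.comp_def] using this
    simpa using hexp.add hpow
  have hev : ∀ᶠ n in atTop, (2 ≤ k n) ∧ ((k n : ℝ) ^ 2 / (d n : ℝ) < 1)
      ∧ (C₀ * (2 * (k n : ℝ)) ^ 2 / (d n : ℝ) ≤ 1) := by
    have e3 : ∀ᶠ n in atTop, (k n : ℝ) ^ 2 / (d n : ℝ) < 1 / (4 * C₀) :=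
      h2.eventually (gt_mem_nhds (by positivity))
    filter_upwards [hkN.eventually_ge_atTop 2, h2.eventually (gt_mem_nhds one_pos), e3]
      with n h1 h2' h3
    refine ⟨h1, h2', ?_⟩
    have : C₀ * (2 * (k n : ℝ)) ^ 2 / (d n : ℝ) = 4 * C₀ * ((k n : ℝ) ^ 2 / d n) := by
      ring
    rw [this]
    have h4C : (0 : ℝ) < 4 * C₀ := by positivity
    calc 4 * C₀ * ((k n : ℝ) ^ 2 / d n) ≤ 4 * C₀ * (1 / (4 * C₀)) := by
          exact mul_le_mul_of_nonneg_left h3.le h4C.le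
      _ = 1 := by field_simp
  refine tendsto_of_tendsto_of_tendsto_of_le_of_le' tendsto_const_nhds hBT ?_ ?_
  · filter_upwards [hev] with n hn
    obtain ⟨h1, h2', h3⟩ := hn
    have hd01 : d n = 0 ∨ k n ^ 2 ≤ d n := by
      rcases Nat.eq_zero_or_pos (d n) with h | h
      · exact Or.inl h
      · right
        have hdR : (0 : ℝ) < (d n : ℝ) := by exact_mod_cast h
        have : (k n : ℝ) ^ 2 < d n := by rwa [div_lt_one hdR] at h2'
        have h' : ((k n ^ 2 : ℕ) : ℝ) < (d n : ℝ) := by push_cast; exact this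
        exact_mod_cast h'.le
    exact (hgAux_sup_bounds hC₀ n (k n) (d n) (hgM n (k n) (d n)) h1 (hk5 n) hd01 h3
      (hgM_ge n (k n) (d n))).1
  · filter_upwards [hev] with n hn
    obtain ⟨h1, h2', h3⟩ := hn
    have hd01 : d n = 0 ∨ k n ^ 2 ≤ d n := by
      rcases Nat.eq_zero_or_pos (d n) with h | h
      · exact Or.inl h
      · right
        have hdR : (0 : ℝ) < (d n : ℝ) := by exact_mod_cast h
        have : (k n : ℝ) ^ 2 < d n := by rwa [div_lt_one hdR] at h2'
        have h' : ((k n ^ 2 : ℕ) : ℝ) < (d n : ℝ) := by push_cast; exact this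
        exact_mod_cast h'.le
    exact (hgAux_sup_bounds hC₀ n (k n) (d n) (hgM n (k n) (d n)) h1 (hk5 n) hd01 h3
      (hgM_ge n (k n) (d n))).2
end
end
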